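/- For any v ∈ P, there is exactly one common solution ω ∈ Γ (i.e., exactly one ω ∈ Γ that simultaneously attains max_{ω'∈Γ} g̃_v(ω') and max_{ω'∈Γ} g̃_v^{(j)}(ω') for every j ∈ {1,…,L}), and this ω satisfies both the balanced condition and the pseudo-balanced condition. (Theorem 4 of the paper.) -/

import Mathlib

open Finset
open scoped Classical

namespace HetTS

noncomputable section

variable {K M : ℕ}

/-- Number of clients having access to arm `i`. -/
def Mi (S : Fin M → Finset (Fin K)) (i : Fin K) : ℕ :=
  (Finset.univ.filter fun m => i ∈ S m).card

/-- The mean reward `μ_i(v)` of arm `i`: average of the means of arm `i` across the clients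
having access to it. -/
def armMean (S : Fin M → Finset (Fin K)) (v : Fin M → Fin K → ℝ) (i : Fin K) : ℝ :=
  (1 / (Mi S i : ℝ)) * ∑ m ∈ Finset.univ.filter (fun m => i ∈ S m), v m i

/-- Arm `i` is the (unique) best arm of client `m` under instance `v`. -/
def isBest (S : Fin M → Finset (Fin K)) (v : Fin M → Fin K → ℝ) (m : Fin M) (i : Fin K) :
    Prop :=
  i ∈ S m ∧ ∀ j ∈ S m, j ≠ i → armMean S v j < armMean S v i

/-- The set `P` of problem instances having a unique best arm at each client. -/
def PSet (S : Fin M → Finset (Fin K)) : Set (Fin M → Fin K → ℝ) :=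
  {v | ∀ m, ∃ i, isBest S v m i}

/-- The set of alternative instances `Alt(v)`: instances in `P` whose tuple of best arms
differs from that of `v`. -/
def AltSet (S : Fin M → Finset (Fin K)) (v : Fin M → Fin K → ℝ) :
    Set (Fin M → Fin K → ℝ) :=
  {v' | v' ∈ PSet S ∧ ¬ ∀ (m : Fin M) (i : Fin K), isBest S v m i ↔ isBest S v' m i}

/-- The set `Γ` of allocations: families `(ω_{i,m})_{m, i ∈ S_m}` of nonnegative weights
summing to one for each client (represented as functions vanishing off the support). -/
def Gam (S : Fin M → Finset (Fin K)) : Set (Fin M → Fin K → ℝ) :=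
  {ω | (∀ m, ∀ i ∈ S m, 0 ≤ ω m i) ∧ (∀ m, ∑ i ∈ S m, ω m i = 1) ∧
    ∀ m, ∀ i, i ∉ S m → ω m i = 0}

/-- `g_v(ω)`, the inner infimum over alternative instances. -/
def gfun (S : Fin M → Finset (Fin K)) (v ω : Fin M → Fin K → ℝ) : ℝ :=
  sInf {x | ∃ v' ∈ AltSet S v,
    x = ∑ m : Fin M, ∑ i ∈ S m, ω m i * (v m i - v' m i) ^ 2 / 2}

/-- The gap `Δ_i(v)`. -/
def Delta (S : Fin M → Finset (Fin K)) (v : Fin M → Fin K → ℝ) (i : Fin K) : ℝ :=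
  sInf {x | ∃ m : Fin M, i ∈ S m ∧
    x = |armMean S v i - sSup {y | ∃ j ∈ S m, j ≠ i ∧ y = armMean S v j}|}

/-- The denominator `(1/M_i²) ∑_{m : i ∈ S_m} 1/ω_{i,m}`. -/
def armDenom (S : Fin M → Finset (Fin K)) (ω : Fin M → Fin K → ℝ) (i : Fin K) : ℝ :=
  (1 / (Mi S i : ℝ) ^ 2) * ∑ m ∈ Finset.univ.filter (fun m => i ∈ S m), 1 / ω m i

/-- The simplified objective `g̃_v(ω)`. -/
def gtilde (S : Fin M → Finset (Fin K)) (v ω : Fin M → Fin K → ℝ) : ℝ :=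
  if ∃ m, ∃ i ∈ S m, ω m i = 0 then 0
  else sInf {x | ∃ i : Fin K, x = (Delta S v i) ^ 2 / 2 / armDenom S ω i}

/-- The relation `R` on arms: two arms are related if some client has access to both. -/
def armRel (S : Fin M → Finset (Fin K)) (i₁ i₂ : Fin K) : Prop :=
  ∃ m, i₁ ∈ S m ∧ i₂ ∈ S m

/-- The equivalence class `Q` of arm `i` under the smallest equivalence relation
containing `R`. -/
def armClass (S : Fin M → Finset (Fin K)) (i : Fin K) : Set (Fin K) :=
  {i' | Relation.EqvGen (armRel S) i i'}

/-- Same equivalence class, as a `Finset`. -/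
def classFinset (S : Fin M → Finset (Fin K)) (i : Fin K) : Finset (Fin K) :=
  Finset.univ.filter fun i' => Relation.EqvGen (armRel S) i i'

/-- The per-class objective `g̃_v^{(j)}(ω)` where `Q` is the `j`-th equivalence class. -/
def gtildeC (S : Fin M → Finset (Fin K)) (v : Fin M → Fin K → ℝ) (Q : Set (Fin K))
    (ω : Fin M → Fin K → ℝ) : ℝ :=
  if ∃ m, ∃ i ∈ S m, i ∈ Q ∧ ω m i = 0 then 0
  else sInf {x | ∃ i ∈ Q, x = (Delta S v i) ^ 2 / armDenom S ω i}

/-- `ω` is a common solution: it simultaneously attains `max_{ω'∈Γ} g̃_v(ω')` and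
`max_{ω'∈Γ} g̃_v^{(j)}(ω')` for every equivalence class `Q_j`. -/
def IsCommonSol (S : Fin M → Finset (Fin K)) (v ω : Fin M → Fin K → ℝ) : Prop :=
  ω ∈ Gam S ∧ (∀ ω' ∈ Gam S, gtilde S v ω' ≤ gtilde S v ω) ∧
    ∀ i : Fin K, ∀ ω' ∈ Gam S,
      gtildeC S v (armClass S i) ω' ≤ gtildeC S v (armClass S i) ω

/-- The balanced condition. -/
def BalancedCond (S : Fin M → Finset (Fin K)) (ω : Fin M → Fin K → ℝ) : Prop :=
  ∀ m₁ m₂ : Fin M, ∀ i₁ i₂ : Fin K, i₁ ∈ S m₁ → i₂ ∈ S m₁ → i₁ ∈ S m₂ → i₂ ∈ S m₂ →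
    ω m₁ i₁ / ω m₁ i₂ = ω m₂ i₁ / ω m₂ i₂

/-- The pseudo-balanced condition for instance `v`. -/
def PseudoBalancedCond (S : Fin M → Finset (Fin K)) (v ω : Fin M → Fin K → ℝ) : Prop :=
  ∀ i₁ i₂ : Fin K, Relation.EqvGen (armRel S) i₁ i₂ →
    (Delta S v i₁) ^ 2 / armDenom S ω i₁ = (Delta S v i₂) ^ 2 / armDenom S ω i₂

/-- The matrix `H(v)` (restricted to a class it gives `H^{(j)}(v)`). -/
def Hmat (S : Fin M → Finset (Fin K)) (v : Fin M → Fin K → ℝ) (i₁ i₂ : Fin K) : ℝ :=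
  (1 / ((Delta S v i₁) ^ 2 * (Mi S i₁ : ℝ) ^ 2)) *
    ((Finset.univ.filter fun m => i₁ ∈ S m ∧ i₂ ∈ S m).card : ℝ)

-- ===================== AUXILIARY DEVELOPMENT =====================

section Aux

open Filter Topology

lemma sInf_image_eq_inf' {ι : Type*} {t : Finset ι} (ht : t.Nonempty) (f : ι → ℝ) :
    sInf ↑(t.image f) = t.inf' ht f := by
  have hne : (t.image f).Nonempty := ht.image f
  rw [hne.csInf_eq_min']
  apply le_antisymm
  · obtain ⟨i, hi, hif⟩ := Finset.exists_mem_eq_inf' ht f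
    rw [hif]
    exact Finset.min'_le _ _ (Finset.mem_image_of_mem f hi)
  · obtain ⟨y, hy, hyv⟩ := Finset.mem_image.1 (Finset.min'_mem (t.image f) hne)
    rw [← hyv]
    exact Finset.inf'_le f hy

lemma inv_midpoint_le {a b : ℝ} (ha : 0 < a) (hb : 0 < b) :
    1 / ((a + b) / 2) ≤ (1 / a + 1 / b) / 2 := by
  rw [div_le_div_iff₀ (by linarith) (by norm_num)]
  have h : (1 / a + 1 / b) = (a + b) / (a * b) := by field_simp; ring
  rw [h, div_mul_eq_mul_div, le_div_iff₀ (by positivity)]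
  nlinarith [sq_nonneg (a - b)]

lemma inv_midpoint_eq {a b : ℝ} (ha : 0 < a) (hb : 0 < b)
    (h : 1 / ((a + b) / 2) = (1 / a + 1 / b) / 2) : a = b := by
  have h2 : (a - b) ^ 2 = 0 := by
    have hab : 0 < a + b := by linarith
    field_simp at h
    nlinarith
  nlinarith [sq_nonneg (a-b), h2]

lemma continuousOn_inf' {ι X : Type*} [TopologicalSpace X] {t : Finset ι} (ht : t.Nonempty)
    {f : ι → X → ℝ} {s : Set X} (hf : ∀ i ∈ t, ContinuousOn (f i) s) :
    ContinuousOn (fun x => t.inf' ht fun i => f i x) s := by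
  refine Finset.Nonempty.cons_induction
    (motive := fun t ht => (∀ i ∈ t, ContinuousOn (f i) s) →
      ContinuousOn (fun x => t.inf' ht fun i => f i x) s) ?_ ?_ ht hf
  · intro a hfa
    simpa using hfa a (by simp)
  · intro a u ha hu ih hfa
    have h1 : ContinuousOn (fun x => u.inf' hu fun i => f i x) s :=
      ih (fun i hi => hfa i (Finset.mem_cons_of_mem hi))
    have h2 : ContinuousOn (f a) s := hfa a (Finset.mem_cons_self a u)
    have heq : (fun x => (Finset.cons a u ha).inf' (Finset.cons_nonempty ha) fun i => f i x)
        = fun x => (f a x) ⊓ (u.inf' hu fun i => f i x) :=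
      funext fun x => Finset.inf'_cons hu (fun i => f i x)
    rw [heq]
    exact h2.inf h1

lemma sumInv_perturb {n : ℕ} (t : Finset (Fin n)) (x : Fin n → ℝ) (hx : ∀ m ∈ t, 0 < x m)
    (η : Fin n → ℝ → ℝ) (c : Fin n → ℝ) (d : ℕ)
    (hη : ∀ m ∈ t, Filter.Tendsto (fun s => η m s / s ^ d) (𝓝[>] (0:ℝ)) (𝓝 (c m)))
    (hη0 : ∀ m ∈ t, Filter.Tendsto (fun s => η m s) (𝓝[>] (0:ℝ)) (𝓝 0))
    (hc : 0 < ∑ m ∈ t, c m / x m ^ 2) :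
    ∀ᶠ s in 𝓝[>] (0:ℝ), (∀ m ∈ t, 0 < x m + η m s) ∧
      ∑ m ∈ t, 1 / (x m + η m s) < ∑ m ∈ t, 1 / x m := by
  have hpos : ∀ᶠ s in 𝓝[>] (0:ℝ), ∀ m ∈ t, 0 < x m + η m s := by
    rw [Filter.eventually_all_finset]
    intro m hm
    have h1 : Filter.Tendsto (fun s => x m + η m s) (𝓝[>] (0:ℝ)) (𝓝 (x m)) := by
      simpa using (tendsto_const_nhds.add (hη0 m hm))
    exact h1.eventually (eventually_gt_nhds (hx m hm))
  have hG : Filter.Tendsto (fun s => ∑ m ∈ t, (-(η m s / s ^ d) / (x m * (x m + η m s))))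
      (𝓝[>] (0:ℝ)) (𝓝 (∑ m ∈ t, -(c m / x m ^ 2))) := by
    apply tendsto_finset_sum
    intro m hm
    have hxm := hx m hm
    have hden : Filter.Tendsto (fun s => x m * (x m + η m s)) (𝓝[>] (0:ℝ))
        (𝓝 (x m * x m)) := by
      simpa using tendsto_const_nhds.mul (tendsto_const_nhds.add (hη0 m hm))
    have := ((hη m hm).neg).div hden (by nlinarith)
    convert this using 2
    · rfl
    rw [sq]; field_simp
  have hneg : ∀ᶠ s in 𝓝[>] (0:ℝ),
      ∑ m ∈ t, (-(η m s / s ^ d) / (x m * (x m + η m s))) < 0 := by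
    apply hG.eventually (eventually_lt_nhds _)
    have h : ∑ m ∈ t, -(c m / x m ^ 2) = -∑ m ∈ t, c m / x m ^ 2 := by
      simp
    rw [h]; linarith
  have hmem : ∀ᶠ s in 𝓝[>] (0:ℝ), (0:ℝ) < s := eventually_mem_nhdsWithin
  filter_upwards [hpos, hneg, hmem] with s hp hn hs
  refine ⟨hp, ?_⟩
  have hsd : (0:ℝ) < s ^ d := by positivity
  have key : ∑ m ∈ t, (1 / (x m + η m s) - 1 / x m)
      = s ^ d * ∑ m ∈ t, (-(η m s / s ^ d) / (x m * (x m + η m s))) := by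
    rw [Finset.mul_sum]
    apply Finset.sum_congr rfl
    intro m hm
    have h1 : x m ≠ 0 := ne_of_gt (hx m hm)
    have h2 : x m + η m s ≠ 0 := ne_of_gt (hp m hm)
    have h3 : s ^ d ≠ 0 := ne_of_gt hsd
    field_simp
    ring
  have hlt : ∑ m ∈ t, (1 / (x m + η m s) - 1 / x m) < 0 := by
    rw [key]; exact mul_neg_of_pos_of_neg hsd hn
  rw [Finset.sum_sub_distrib] at hlt
  linarith

end Aux

-- ===================== PART B : basics =====================

section Basics

open Filter Topology

variable {S : Fin M → Finset (Fin K)} {v : Fin M → Fin K → ℝ}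

/-- clients of arm `i` -/
def clients (S : Fin M → Finset (Fin K)) (i : Fin K) : Finset (Fin M) :=
  Finset.univ.filter fun m => i ∈ S m

/-- the per-arm objective `F_i(ω) = Δ_i² / D_i(ω)` -/
def Fq (S : Fin M → Finset (Fin K)) (v ω : Fin M → Fin K → ℝ) (i : Fin K) : ℝ :=
  (Delta S v i) ^ 2 / armDenom S ω i

lemma armDenom_def (S : Fin M → Finset (Fin K)) (ω : Fin M → Fin K → ℝ) (i : Fin K) :
    armDenom S ω i = (1 / (Mi S i : ℝ) ^ 2) * ∑ m ∈ clients S i, 1 / ω m i := rfl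

lemma mem_clients {m : Fin M} {i : Fin K} : m ∈ clients S i ↔ i ∈ S m := by
  simp [clients]

lemma clients_nonempty (hcov : ∀ i : Fin K, ∃ m, i ∈ S m) (i : Fin K) :
    (clients S i).Nonempty := by
  obtain ⟨m, hm⟩ := hcov i
  exact ⟨m, mem_clients.2 hm⟩

lemma Mi_pos (hcov : ∀ i : Fin K, ∃ m, i ∈ S m) (i : Fin K) : 0 < Mi S i :=
  Finset.card_pos.2 (clients_nonempty hcov i)

lemma Mi_cast_pos (hcov : ∀ i : Fin K, ∃ m, i ∈ S m) (i : Fin K) : (0:ℝ) < (Mi S i : ℝ) := by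
  exact_mod_cast Mi_pos hcov i

lemma armRel_symm (S : Fin M → Finset (Fin K)) : Symmetric (armRel S) :=
  fun _ _ ⟨m, h1, h2⟩ => ⟨m, h2, h1⟩

lemma mem_classFinset {i₀ i : Fin K} :
    i ∈ classFinset S i₀ ↔ Relation.EqvGen (armRel S) i₀ i := by
  simp [classFinset]

lemma mem_armClass_iff {i₀ i : Fin K} :
    i ∈ armClass S i₀ ↔ i ∈ classFinset S i₀ := by
  simp [armClass, classFinset, Set.mem_setOf_eq]

lemma self_mem_classFinset (S : Fin M → Finset (Fin K)) (i₀ : Fin K) :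
    i₀ ∈ classFinset S i₀ :=
  mem_classFinset.2 (Relation.EqvGen.refl i₀)

lemma classFinset_closed {i₀ i j : Fin K} (hi : i ∈ classFinset S i₀)
    (hrel : armRel S i j) : j ∈ classFinset S i₀ :=
  mem_classFinset.2 (Relation.EqvGen.trans _ _ _ (mem_classFinset.1 hi)
    (Relation.EqvGen.rel _ _ hrel))

lemma subset_classFinset_of_mem {m : Fin M} {i i₀ : Fin K} (hiS : i ∈ S m)
    (hiQ : i ∈ classFinset S i₀) : S m ⊆ classFinset S i₀ :=
  fun j hj => classFinset_closed hiQ ⟨m, hiS, hj⟩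

lemma armClass_eq {i₀ i₁ : Fin K} (h : Relation.EqvGen (armRel S) i₀ i₁) :
    armClass S i₀ = armClass S i₁ :=
  Set.ext fun j => ⟨fun hj => Relation.EqvGen.trans _ _ _ (Relation.EqvGen.symm _ _ h) hj,
    fun hj => Relation.EqvGen.trans _ _ _ h hj⟩

lemma Delta_pos (hS : ∀ m, 2 ≤ (S m).card) (hv : v ∈ PSet S)
    (hcov : ∀ i : Fin K, ∃ m, i ∈ S m) (i : Fin K) :
    0 < Delta S v i := by
  have hset : {x | ∃ m : Fin M, i ∈ S m ∧
      x = |armMean S v i - sSup {y | ∃ j ∈ S m, j ≠ i ∧ y = armMean S v j}|}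
      = ↑((clients S i).image (fun m =>
          |armMean S v i - sSup {y | ∃ j ∈ S m, j ≠ i ∧ y = armMean S v j}|)) := by
    ext x
    constructor
    · rintro ⟨m, hm, rfl⟩
      exact Finset.mem_coe.2 (Finset.mem_image_of_mem _ (mem_clients.2 hm))
    · intro hx
      obtain ⟨m, hm, rfl⟩ := Finset.mem_image.1 (Finset.mem_coe.1 hx)
      exact ⟨m, mem_clients.1 hm, rfl⟩
  rw [Delta, hset, sInf_image_eq_inf' (clients_nonempty hcov i)]
  obtain ⟨m, hm, heq⟩ := Finset.exists_mem_eq_inf' (clients_nonempty hcov i)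
    (fun m => |armMean S v i - sSup {y | ∃ j ∈ S m, j ≠ i ∧ y = armMean S v j}|)
  rw [heq]
  have him : i ∈ S m := mem_clients.1 hm
  have hY : {y | ∃ j ∈ S m, j ≠ i ∧ y = armMean S v j}
      = ↑(((S m).erase i).image (armMean S v)) := by
    ext y
    constructor
    · rintro ⟨j, hjS, hji, rfl⟩
      exact Finset.mem_coe.2 (Finset.mem_image_of_mem _ (Finset.mem_erase.2 ⟨hji, hjS⟩))
    · intro hy
      obtain ⟨j, hj, rfl⟩ := Finset.mem_image.1 (Finset.mem_coe.1 hy)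
      exact ⟨j, (Finset.mem_erase.1 hj).2, (Finset.mem_erase.1 hj).1, rfl⟩
  have herase : ((S m).erase i).Nonempty := by
    rw [← Finset.card_pos, Finset.card_erase_of_mem him]
    have := hS m
    omega
  have hYne : (((S m).erase i).image (armMean S v)).Nonempty := herase.image _
  rw [hY, hYne.csSup_eq_max']
  obtain ⟨j₀, hj₀, hj₀v⟩ := Finset.mem_image.1 (Finset.max'_mem _ hYne)
  obtain ⟨a, haS, hbest⟩ := hv m
  rw [abs_pos]
  rcases eq_or_ne i a with rfl | hia
  · refine sub_ne_zero.2 (ne_of_gt ?_)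
    rw [← hj₀v]
    exact hbest j₀ (Finset.mem_erase.1 hj₀).2 (Finset.mem_erase.1 hj₀).1
  · refine sub_ne_zero.2 (ne_of_lt ?_)
    have h1 : armMean S v i < armMean S v a := hbest i him hia
    have h2 : armMean S v a ≤ (((S m).erase i).image (armMean S v)).max' hYne :=
      Finset.le_max' _ _ (Finset.mem_image_of_mem _ (Finset.mem_erase.2 ⟨Ne.symm hia, haS⟩))
    linarith

lemma sumInv_pos (hcov : ∀ i : Fin K, ∃ m, i ∈ S m) {ω : Fin M → Fin K → ℝ} {i : Fin K}
    (hpos : ∀ m, i ∈ S m → 0 < ω m i) :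
    0 < ∑ m ∈ clients S i, 1 / ω m i := by
  apply Finset.sum_pos
  · intro m hm
    have := hpos m (mem_clients.1 hm)
    positivity
  · exact clients_nonempty hcov i

lemma armDenom_pos (hcov : ∀ i : Fin K, ∃ m, i ∈ S m) {ω : Fin M → Fin K → ℝ} {i : Fin K}
    (hpos : ∀ m, i ∈ S m → 0 < ω m i) : 0 < armDenom S ω i := by
  rw [armDenom_def]
  have h1 := sumInv_pos hcov hpos
  have h2 := Mi_cast_pos hcov i
  positivity

lemma Fq_pos (hS : ∀ m, 2 ≤ (S m).card) (hv : v ∈ PSet S) (hcov : ∀ i : Fin K, ∃ m, i ∈ S m)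
    {ω : Fin M → Fin K → ℝ} {i : Fin K} (hpos : ∀ m, i ∈ S m → 0 < ω m i) :
    0 < Fq S v ω i :=
  div_pos (pow_pos (Delta_pos hS hv hcov i) 2) (armDenom_pos hcov hpos)

lemma Fq_le_coord (hv : v ∈ PSet S) (hcov : ∀ i : Fin K, ∃ m, i ∈ S m)
    {ω : Fin M → Fin K → ℝ} {i : Fin K} {m : Fin M} (him : i ∈ S m)
    (hpos : ∀ m', i ∈ S m' → 0 < ω m' i) :
    Fq S v ω i ≤ (Delta S v i) ^ 2 * (Mi S i : ℝ) ^ 2 * ω m i := by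
  have hωpos := hpos m him
  have hMi := Mi_cast_pos hcov i
  have hsum : 1 / ω m i ≤ ∑ m' ∈ clients S i, 1 / ω m' i := by
    apply Finset.single_le_sum (f := fun m' => 1 / ω m' i) _ (mem_clients.2 him)
    intro m' hm'
    have := hpos m' (mem_clients.1 hm')
    positivity
  have hd : (1 / (Mi S i : ℝ) ^ 2) * (1 / ω m i) ≤ armDenom S ω i := by
    rw [armDenom_def]
    apply mul_le_mul_of_nonneg_left hsum (by positivity)
  have hdpos : 0 < (1 / (Mi S i : ℝ) ^ 2) * (1 / ω m i) := by positivity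
  calc Fq S v ω i ≤ (Delta S v i) ^ 2 / ((1 / (Mi S i : ℝ) ^ 2) * (1 / ω m i)) := by
        apply div_le_div_of_nonneg_left (by positivity) hdpos hd
    _ = (Delta S v i) ^ 2 * (Mi S i : ℝ) ^ 2 * ω m i := by
        field_simp

lemma gtildeC_of_pos (i₀ : Fin K) {ω : Fin M → Fin K → ℝ}
    (hpos : ∀ m, ∀ i ∈ S m, i ∈ classFinset S i₀ → 0 < ω m i) :
    gtildeC S v (armClass S i₀) ω
      = (classFinset S i₀).inf' ⟨i₀, self_mem_classFinset S i₀⟩ (Fq S v ω) := by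
  have hcond : ¬ ∃ m, ∃ i ∈ S m, i ∈ armClass S i₀ ∧ ω m i = 0 := by
    rintro ⟨m, i, hiS, hiQ, h0⟩
    exact (hpos m i hiS (mem_armClass_iff.1 hiQ)).ne' h0
  have hsetEq : {x | ∃ i ∈ armClass S i₀, x = (Delta S v i) ^ 2 / armDenom S ω i}
      = ↑((classFinset S i₀).image (Fq S v ω)) := by
    ext x
    constructor
    · rintro ⟨i, hiQ, rfl⟩
      exact Finset.mem_coe.2 (Finset.mem_image_of_mem _ (mem_armClass_iff.1 hiQ))
    · intro hx
      obtain ⟨i, hi, rfl⟩ := Finset.mem_image.1 (Finset.mem_coe.1 hx)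
      exact ⟨i, mem_armClass_iff.2 hi, rfl⟩
  rw [gtildeC, if_neg hcond, hsetEq, sInf_image_eq_inf']
  exact ⟨i₀, self_mem_classFinset S i₀⟩

lemma gtildeC_zero {i₀ : Fin K} {ω : Fin M → Fin K → ℝ}
    (h : ∃ m, ∃ i ∈ S m, i ∈ armClass S i₀ ∧ ω m i = 0) :
    gtildeC S v (armClass S i₀) ω = 0 := by
  rw [gtildeC, if_pos h]

lemma gtilde_of_pos (hK0 : 0 < K) {ω : Fin M → Fin K → ℝ}
    (hpos : ∀ m, ∀ i ∈ S m, 0 < ω m i) :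
    gtilde S v ω = Finset.univ.inf' ⟨⟨0, hK0⟩, Finset.mem_univ _⟩
      (fun i => Fq S v ω i / 2) := by
  have hcond : ¬ ∃ m, ∃ i ∈ S m, ω m i = 0 := by
    rintro ⟨m, i, hiS, h0⟩
    exact (hpos m i hiS).ne' h0
  have hsetEq : {x | ∃ i : Fin K, x = (Delta S v i) ^ 2 / 2 / armDenom S ω i}
      = ↑((Finset.univ : Finset (Fin K)).image (fun i => Fq S v ω i / 2)) := by
    ext x
    constructor
    · rintro ⟨i, rfl⟩
      refine Finset.mem_coe.2 (Finset.mem_image.2 ⟨i, Finset.mem_univ i, ?_⟩)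
      rw [Fq, div_right_comm]
    · intro hx
      obtain ⟨i, _, rfl⟩ := Finset.mem_image.1 (Finset.mem_coe.1 hx)
      exact ⟨i, by rw [Fq, div_right_comm]⟩
  rw [gtilde, if_neg hcond, hsetEq, sInf_image_eq_inf']
  exact ⟨⟨0, hK0⟩, Finset.mem_univ _⟩

lemma gtilde_zero {ω : Fin M → Fin K → ℝ} (h : ∃ m, ∃ i ∈ S m, ω m i = 0) :
    gtilde S v ω = 0 := by
  rw [gtilde, if_pos h]

end Basics

-- ===================== PART C : existence of maximizers =====================

section Existence

open Filter Topology

variable {S : Fin M → Finset (Fin K)} {v : Fin M → Fin K → ℝ}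

/-- uniform allocation -/
def unif (S : Fin M → Finset (Fin K)) : Fin M → Fin K → ℝ :=
  fun m i => if i ∈ S m then ((S m).card : ℝ)⁻¹ else 0

lemma unif_pos (m : Fin M) {i : Fin K} (hi : i ∈ S m) : 0 < unif S m i := by
  rw [unif, if_pos hi]
  have : 0 < (S m).card := Finset.card_pos.2 ⟨i, hi⟩
  positivity

lemma unif_mem_Gam (hS : ∀ m, 2 ≤ (S m).card) : unif S ∈ Gam S := by
  refine ⟨fun m i hi => (unif_pos m hi).le, fun m => ?_, fun m i hi => by rw [unif, if_neg hi]⟩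
  have hcard : ((S m).card : ℝ) ≠ 0 := by
    have := hS m
    positivity
  calc ∑ i ∈ S m, unif S m i = ∑ i ∈ S m, ((S m).card : ℝ)⁻¹ := by
        apply Finset.sum_congr rfl
        intro i hi
        rw [unif, if_pos hi]
    _ = 1 := by
        rw [Finset.sum_const, nsmul_eq_mul, mul_inv_cancel₀ hcard]

lemma Gam_coord_le_one {ω : Fin M → Fin K → ℝ} (hω : ω ∈ Gam S) (m : Fin M) (i : Fin K) :
    0 ≤ ω m i ∧ ω m i ≤ 1 := by
  by_cases hi : i ∈ S m
  · refine ⟨hω.1 m i hi, ?_⟩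
    have h1 : ω m i ≤ ∑ j ∈ S m, ω m j :=
      Finset.single_le_sum (fun j hj => hω.1 m j hj) hi
    rw [hω.2.1 m] at h1
    exact h1
  · rw [hω.2.2 m i hi]
    norm_num

lemma continuous_eval (m : Fin M) (i : Fin K) :
    Continuous fun ω : Fin M → Fin K → ℝ => ω m i :=
  (continuous_apply i).comp (continuous_apply m)

lemma isClosed_Gam : IsClosed (Gam S) := by
  have h : Gam S = (⋂ (m : Fin M), ⋂ (i : Fin K), {ω : Fin M → Fin K → ℝ | i ∈ S m → 0 ≤ ω m i})
      ∩ ((⋂ (m : Fin M), {ω : Fin M → Fin K → ℝ | ∑ i ∈ S m, ω m i = 1})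
        ∩ (⋂ (m : Fin M), ⋂ (i : Fin K), {ω : Fin M → Fin K → ℝ | i ∉ S m → ω m i = 0})) := by
    ext ω
    simp only [Gam, Set.mem_inter_iff, Set.mem_iInter, Set.mem_setOf_eq]
    try tauto
  rw [h]
  refine IsClosed.inter ?_ (IsClosed.inter ?_ ?_)
  · refine isClosed_iInter fun m => isClosed_iInter fun i => ?_
    by_cases hi : i ∈ S m
    · have he : {ω : Fin M → Fin K → ℝ | i ∈ S m → 0 ≤ ω m i}
          = {ω : Fin M → Fin K → ℝ | 0 ≤ ω m i} := by
        ext ω; simp [hi]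
      rw [he]
      exact isClosed_le continuous_const (continuous_eval m i)
    · have he : {ω : Fin M → Fin K → ℝ | i ∈ S m → 0 ≤ ω m i} = Set.univ := by
        ext ω; simp [hi]
      rw [he]
      exact isClosed_univ
  · refine isClosed_iInter fun m => ?_
    exact isClosed_eq (continuous_finset_sum _ fun i _ => continuous_eval m i) continuous_const
  · refine isClosed_iInter fun m => isClosed_iInter fun i => ?_
    by_cases hi : i ∈ S m
    · have he : {ω : Fin M → Fin K → ℝ | i ∉ S m → ω m i = 0} = Set.univ := by
        ext ω; simp [hi]
      rw [he]
      exact isClosed_univ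
    · have he : {ω : Fin M → Fin K → ℝ | i ∉ S m → ω m i = 0}
          = {ω : Fin M → Fin K → ℝ | ω m i = 0} := by
        ext ω; simp [hi]
      rw [he]
      exact isClosed_eq (continuous_eval m i) continuous_const

lemma isBounded_Gam : Bornology.IsBounded (Gam S) := by
  apply (Metric.isBounded_closedBall (x := (0 : Fin M → Fin K → ℝ)) (r := 1)).subset
  intro ω hω
  rw [Metric.mem_closedBall, dist_zero_right]
  rw [pi_norm_le_iff_of_nonneg (by norm_num)]
  intro m
  rw [pi_norm_le_iff_of_nonneg (by norm_num)]
  intro i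
  rw [Real.norm_eq_abs, abs_le]
  have := Gam_coord_le_one hω m i
  constructor <;> linarith [this.1, this.2]

lemma isCompact_Gam : IsCompact (Gam S) :=
  Metric.isCompact_iff_isClosed_bounded.2 ⟨isClosed_Gam, isBounded_Gam⟩

end Existence

-- ===================== PART C2 : maximizer existence =====================

section Existence2

open Filter Topology

variable {S : Fin M → Finset (Fin K)} {v : Fin M → Fin K → ℝ}

lemma pos_of_gtildeC_pos {ω : Fin M → Fin K → ℝ} {i₀ : Fin K} (hω : ω ∈ Gam S)
    (hc : 0 < gtildeC S v (armClass S i₀) ω) :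
    ∀ m, ∀ i ∈ S m, i ∈ classFinset S i₀ → 0 < ω m i := by
  intro m i hiS hiQ
  rcases (hω.1 m i hiS).lt_or_eq with h | h
  · exact h
  · exfalso
    rw [gtildeC_zero ⟨m, i, hiS, mem_armClass_iff.2 hiQ, h.symm⟩] at hc
    exact lt_irrefl 0 hc

lemma gtildeC_unif_pos (hS : ∀ m, 2 ≤ (S m).card) (hv : v ∈ PSet S)
    (hcov : ∀ i : Fin K, ∃ m, i ∈ S m) (i₀ : Fin K) :
    0 < gtildeC S v (armClass S i₀) (unif S) := by
  rw [gtildeC_of_pos i₀ (fun m i hiS _ => unif_pos m hiS)]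
  apply (Finset.lt_inf'_iff _).2
  intro i _
  exact Fq_pos hS hv hcov (fun m hm => unif_pos m hm)

lemma exists_gtildeC_max (hS : ∀ m, 2 ≤ (S m).card) (hv : v ∈ PSet S)
    (hcov : ∀ i : Fin K, ∃ m, i ∈ S m) (i₀ : Fin K) :
    ∃ ω ∈ Gam S, ∀ ω' ∈ Gam S,
      gtildeC S v (armClass S i₀) ω' ≤ gtildeC S v (armClass S i₀) ω := by
  classical
  set Qf := classFinset S i₀ with hQf
  have hQne : Qf.Nonempty := ⟨i₀, self_mem_classFinset S i₀⟩
  set c₀ := gtildeC S v (armClass S i₀) (unif S) with hc₀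
  have hc₀pos : 0 < c₀ := gtildeC_unif_pos hS hv hcov i₀
  set δ : Fin K → ℝ := fun i => c₀ / ((Delta S v i) ^ 2 * (Mi S i : ℝ) ^ 2) with hδ
  have hδpos : ∀ i : Fin K, 0 < δ i := by
    intro i
    have h1 := Delta_pos hS hv hcov i
    have h2 := Mi_cast_pos hcov i
    simp only [hδ]
    exact div_pos hc₀pos (by positivity)
  set A := {ω : Fin M → Fin K → ℝ | ω ∈ Gam S ∧ ∀ i ∈ Qf, ∀ m, i ∈ S m → δ i ≤ ω m i}
    with hA
  -- membership in A for good points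
  have key1 : ∀ ω ∈ Gam S, c₀ ≤ gtildeC S v (armClass S i₀) ω → ω ∈ A := by
    intro ω hω hge
    have hpos : ∀ m, ∀ i ∈ S m, i ∈ Qf → 0 < ω m i :=
      pos_of_gtildeC_pos hω (lt_of_lt_of_le hc₀pos hge)
    refine ⟨hω, fun i hiQ m hiS => ?_⟩
    have h1 : gtildeC S v (armClass S i₀) ω ≤ Fq S v ω i := by
      rw [gtildeC_of_pos i₀ hpos]
      exact Finset.inf'_le _ hiQ
    have h2 : Fq S v ω i ≤ (Delta S v i) ^ 2 * (Mi S i : ℝ) ^ 2 * ω m i :=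
      Fq_le_coord hv hcov hiS (fun m' hm' => hpos m' i hm' hiQ)
    have h3 : c₀ ≤ (Delta S v i) ^ 2 * (Mi S i : ℝ) ^ 2 * ω m i := by linarith
    have hDM : (0:ℝ) < (Delta S v i) ^ 2 * (Mi S i : ℝ) ^ 2 := by
      have hd1 := Delta_pos hS hv hcov i
      have hd2 := Mi_cast_pos hcov i
      positivity
    simp only [hδ]
    rw [div_le_iff₀ hDM]
    linarith [h3]
  have hunifA : unif S ∈ A := key1 (unif S) (unif_mem_Gam hS) le_rfl
  have hApos : ∀ ω ∈ A, ∀ m, ∀ i ∈ S m, i ∈ Qf → 0 < ω m i := by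
    intro ω hωA m i hiS hiQ
    exact lt_of_lt_of_le (hδpos i) (hωA.2 i hiQ m hiS)
  -- A is compact
  have hAclosed : IsClosed A := by
    have h : A = Gam S ∩ ⋂ (i : Fin K), ⋂ (m : Fin M),
        {ω : Fin M → Fin K → ℝ | i ∈ Qf → i ∈ S m → δ i ≤ ω m i} := by
      ext ω
      simp only [hA, Set.mem_inter_iff, Set.mem_iInter, Set.mem_setOf_eq]
      tauto
    rw [h]
    refine IsClosed.inter isClosed_Gam ?_
    refine isClosed_iInter fun i => isClosed_iInter fun m => ?_
    by_cases hiQ : i ∈ Qf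
    · by_cases hiS : i ∈ S m
      · have he : {ω : Fin M → Fin K → ℝ | i ∈ Qf → i ∈ S m → δ i ≤ ω m i}
            = {ω : Fin M → Fin K → ℝ | δ i ≤ ω m i} := by
          ext ω; simp [hiQ, hiS]
        rw [he]
        exact isClosed_le continuous_const (continuous_eval m i)
      · have he : {ω : Fin M → Fin K → ℝ | i ∈ Qf → i ∈ S m → δ i ≤ ω m i} = Set.univ := by
          ext ω; simp [hiS]
        rw [he]; exact isClosed_univ
    · have he : {ω : Fin M → Fin K → ℝ | i ∈ Qf → i ∈ S m → δ i ≤ ω m i} = Set.univ := by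
        ext ω; simp [hiQ]
      rw [he]; exact isClosed_univ
  have hAcompact : IsCompact A :=
    Metric.isCompact_iff_isClosed_bounded.2
      ⟨hAclosed, isBounded_Gam.subset (fun ω hω => hω.1)⟩
  -- continuity of the objective on A
  set f : (Fin M → Fin K → ℝ) → ℝ := fun ω => Qf.inf' hQne (Fq S v ω) with hf
  have hcont : ContinuousOn f A := by
    apply continuousOn_inf'
    intro i hiQ
    have hsum : ContinuousOn (fun ω : Fin M → Fin K → ℝ =>
        ∑ m ∈ clients S i, 1 / ω m i) A := by
      apply continuousOn_finset_sum
      intro m hm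
      apply ContinuousOn.div continuousOn_const (continuous_eval m i).continuousOn
      intro ω hωA
      exact (hApos ω hωA m i (mem_clients.1 hm) hiQ).ne'
    have hden : ContinuousOn (fun ω : Fin M → Fin K → ℝ => armDenom S ω i) A := by
      have : (fun ω : Fin M → Fin K → ℝ => armDenom S ω i)
          = fun ω => (1 / (Mi S i : ℝ) ^ 2) * ∑ m ∈ clients S i, 1 / ω m i := by
        funext ω; exact armDenom_def S ω i
      rw [this]
      exact continuousOn_const.mul hsum
    apply ContinuousOn.div continuousOn_const hden
    intro ω hωA
    exact (armDenom_pos hcov (fun m hm => hApos ω hωA m i hm hiQ)).ne'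
  obtain ⟨ωs, hωsA, hmaxA⟩ := hAcompact.exists_isMaxOn ⟨unif S, hunifA⟩ hcont
  refine ⟨ωs, hωsA.1, ?_⟩
  have hgω : gtildeC S v (armClass S i₀) ωs = f ωs :=
    gtildeC_of_pos i₀ (fun m i hiS hiQ => hApos ωs hωsA m i hiS hiQ)
  intro ω' hω'
  by_cases hc : c₀ ≤ gtildeC S v (armClass S i₀) ω'
  · have hω'A : ω' ∈ A := key1 ω' hω' hc
    have hgω' : gtildeC S v (armClass S i₀) ω' = f ω' :=
      gtildeC_of_pos i₀ (fun m i hiS hiQ => hApos ω' hω'A m i hiS hiQ)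
    rw [hgω', hgω]
    exact hmaxA hω'A
  · push_neg at hc
    have h1 : c₀ = f (unif S) :=
      gtildeC_of_pos i₀ (fun m i hiS hiQ => hApos _ hunifA m i hiS hiQ)
    have h2 : f (unif S) ≤ f ωs := hmaxA hunifA
    rw [hgω]
    linarith

end Existence2

-- ===================== PART D1 : distance & perturbation direction =====================

section Propagation

open Filter Topology

variable {S : Fin M → Finset (Fin K)} {v : Fin M → Fin K → ℝ}

def Rset (S : Fin M → Finset (Fin K)) (N : Finset (Fin K)) : ℕ → Finset (Fin K)
  | 0 => N
  | n + 1 => Rset S N n ∪ Finset.univ.filter (fun i => ∃ j ∈ Rset S N n, armRel S i j)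

def distN (S : Fin M → Finset (Fin K)) (N : Finset (Fin K)) (i : Fin K) : ℕ :=
  if h : ∃ n, i ∈ Rset S N n then Nat.find h else 0

lemma mem_Rset_distN {N : Finset (Fin K)} {i : Fin K} (h : ∃ n, i ∈ Rset S N n) :
    i ∈ Rset S N (distN S N i) := by
  rw [distN, dif_pos h]
  exact Nat.find_spec h

lemma distN_le {N : Finset (Fin K)} {i : Fin K} {n : ℕ} (h : i ∈ Rset S N n) :
    distN S N i ≤ n := by
  rw [distN, dif_pos ⟨n, h⟩]
  exact Nat.find_min' _ h

lemma distN_zero_mem {N : Finset (Fin K)} {i : Fin K} (h : ∃ n, i ∈ Rset S N n)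
    (h0 : distN S N i = 0) : i ∈ N := by
  have := mem_Rset_distN h
  rwa [h0] at this

lemma distN_step {N : Finset (Fin K)} {i : Fin K} (h : ∃ n, i ∈ Rset S N n)
    (hpos : distN S N i ≠ 0) :
    ∃ j, armRel S i j ∧ distN S N j < distN S N i := by
  obtain ⟨n, hn⟩ : ∃ n, distN S N i = n + 1 := ⟨distN S N i - 1, by omega⟩
  have hmem : i ∈ Rset S N (n + 1) := by
    rw [← hn]; exact mem_Rset_distN h
  rw [Rset] at hmem
  rcases Finset.mem_union.1 hmem with hmem' | hmem'
  · exfalso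
    have := distN_le hmem'
    omega
  · obtain ⟨j, hjR, hrel⟩ := (Finset.mem_filter.1 hmem').2
    refine ⟨j, hrel, ?_⟩
    have := distN_le hjR
    omega

lemma eqvGen_to_rtg {α : Type*} {r : α → α → Prop} (hsym : Symmetric r) {a b : α}
    (h : Relation.EqvGen r a b) : Relation.ReflTransGen r a b := by
  induction h with
  | rel x y h => exact Relation.ReflTransGen.single h
  | refl x => exact Relation.ReflTransGen.refl
  | symm x y h ih => exact (Std.Symm.symm (self := @Relation.ReflTransGen.stdSymm _ r ⟨fun a b h => hsym h⟩) _ _ ih)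
  | trans x y z h1 h2 ih1 ih2 => exact ih1.trans ih2

lemma reach_Rset {N : Finset (Fin K)} {i iN : Fin K}
    (h : Relation.ReflTransGen (armRel S) i iN) (hiN : iN ∈ N) :
    ∃ n, i ∈ Rset S N n := by
  induction h using Relation.ReflTransGen.head_induction_on with
  | refl => exact ⟨0, hiN⟩
  | head h' _ ih =>
      obtain ⟨n, hn⟩ := ih
      refine ⟨n + 1, ?_⟩
      rw [Rset]
      exact Finset.mem_union_right _ (Finset.mem_filter.2 ⟨Finset.mem_univ _, ⟨_, hn, h'⟩⟩)

/-- perturbation direction -/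
def eta (S : Fin M → Finset (Fin K)) (Qf : Finset (Fin K)) (d : Fin K → ℕ) (dm : Fin M → ℕ)
    (m : Fin M) (i : Fin K) (t : ℝ) : ℝ :=
  if i ∈ S m ∧ S m ⊆ Qf then
    (if dm m < d i then t ^ d i
     else -(∑ j ∈ (S m).filter (fun j => dm m < d j), t ^ d j)
        / (((S m).filter (fun j => d j = dm m)).card : ℝ))
  else 0

lemma eta_sum_zero {Qf : Finset (Fin K)} {d : Fin K → ℕ} {dm : Fin M → ℕ}
    (hdm_le : ∀ m, ∀ i ∈ S m, dm m ≤ d i) (hdm_att : ∀ m, ∃ i ∈ S m, d i = dm m)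
    (m : Fin M) (t : ℝ) :
    ∑ i ∈ S m, eta S Qf d dm m i t = 0 := by
  by_cases hQ : S m ⊆ Qf
  · rw [← Finset.sum_filter_add_sum_filter_not (S m) (fun j => dm m < d j)]
    have hrec : ∑ i ∈ (S m).filter (fun j => dm m < d j), eta S Qf d dm m i t
        = ∑ j ∈ (S m).filter (fun j => dm m < d j), t ^ d j := by
      apply Finset.sum_congr rfl
      intro i hi
      obtain ⟨hiS, hilt⟩ := Finset.mem_filter.1 hi
      rw [eta, if_pos ⟨hiS, hQ⟩, if_pos hilt]
    have hfil : (S m).filter (fun j => ¬ dm m < d j) = (S m).filter (fun j => d j = dm m) := by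
      apply Finset.filter_congr
      intro j hj
      have := hdm_le m j hj
      constructor
      · intro h; omega
      · intro h; omega
    have hcard : (0:ℝ) < (((S m).filter (fun j => d j = dm m)).card : ℝ) := by
      obtain ⟨j, hjS, hjd⟩ := hdm_att m
      have : j ∈ (S m).filter (fun j => d j = dm m) := Finset.mem_filter.2 ⟨hjS, hjd⟩
      exact_mod_cast Finset.card_pos.2 ⟨j, this⟩
    have hdon : ∑ i ∈ (S m).filter (fun j => ¬ dm m < d j), eta S Qf d dm m i t
        = -(∑ j ∈ (S m).filter (fun j => dm m < d j), t ^ d j) := by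
      rw [hfil]
      have : ∀ i ∈ (S m).filter (fun j => d j = dm m),
          eta S Qf d dm m i t = -(∑ j ∈ (S m).filter (fun j => dm m < d j), t ^ d j)
            / (((S m).filter (fun j => d j = dm m)).card : ℝ) := by
        intro i hi
        obtain ⟨hiS, hid⟩ := Finset.mem_filter.1 hi
        rw [eta, if_pos ⟨hiS, hQ⟩, if_neg (by omega)]
      rw [Finset.sum_congr rfl this, Finset.sum_const, nsmul_eq_mul]
      field_simp
    rw [hrec, hdon]
    ring
  · apply Finset.sum_eq_zero
    intro i hi
    rw [eta, if_neg (by tauto)]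

lemma eta_tendsto_zero {Qf : Finset (Fin K)} {d : Fin K → ℕ} {dm : Fin M → ℕ}
    (m : Fin M) (i : Fin K) :
    Filter.Tendsto (fun t => eta S Qf d dm m i t) (𝓝[>] (0:ℝ)) (𝓝 0) := by
  have hpow : ∀ k : ℕ, 1 ≤ k →
      Filter.Tendsto (fun t : ℝ => t ^ k) (𝓝[>] (0:ℝ)) (𝓝 0) := by
    intro k hk
    have h : Filter.Tendsto (fun t : ℝ => t ^ k) (𝓝 0) (𝓝 0) := by
      simpa [zero_pow (by omega : k ≠ 0)] using (continuous_pow k).tendsto (0:ℝ)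
    exact h.mono_left nhdsWithin_le_nhds
  simp only [eta]
  by_cases h1 : i ∈ S m ∧ S m ⊆ Qf
  · simp only [if_pos h1]
    by_cases h2 : dm m < d i
    · simp only [if_pos h2]
      exact hpow (d i) (by omega)
    · simp only [if_neg h2]
      have hsum : Filter.Tendsto
          (fun t : ℝ => ∑ j ∈ (S m).filter (fun j => dm m < d j), t ^ d j)
          (𝓝[>] (0:ℝ)) (𝓝 0) := by
        have := tendsto_finset_sum ((S m).filter (fun j => dm m < d j))
          (f := fun j (t : ℝ) => t ^ d j) (a := fun _ => (0:ℝ))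
          (fun j hj => hpow (d j) (by
            have := (Finset.mem_filter.1 hj).2
            omega))
        simpa using this
      have := (hsum.neg).div_const (((S m).filter (fun j => d j = dm m)).card : ℝ)
      simpa using this
  · simp only [if_neg h1]
    exact tendsto_const_nhds

lemma eta_div_tendsto {Qf : Finset (Fin K)} {d : Fin K → ℕ} {dm : Fin M → ℕ}
    (hdm_le : ∀ m, ∀ i ∈ S m, dm m ≤ d i)
    (m : Fin M) (i : Fin K) (hiS : i ∈ S m) (hQ : S m ⊆ Qf) :
    Filter.Tendsto (fun t => eta S Qf d dm m i t / t ^ d i) (𝓝[>] (0:ℝ))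
      (𝓝 (if dm m < d i then 1 else 0)) := by
  have hpow : ∀ k : ℕ, 1 ≤ k →
      Filter.Tendsto (fun t : ℝ => t ^ k) (𝓝[>] (0:ℝ)) (𝓝 0) := by
    intro k hk
    have h : Filter.Tendsto (fun t : ℝ => t ^ k) (𝓝 0) (𝓝 0) := by
      simpa [zero_pow (by omega : k ≠ 0)] using (continuous_pow k).tendsto (0:ℝ)
    exact h.mono_left nhdsWithin_le_nhds
  have hmem : ∀ᶠ t in 𝓝[>] (0:ℝ), (0:ℝ) < t := eventually_mem_nhdsWithin
  by_cases h2 : dm m < d i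
  · rw [if_pos h2]
    apply Filter.Tendsto.congr' (f₁ := fun _ => (1:ℝ))
    · filter_upwards [hmem] with t ht
      rw [eta, if_pos ⟨hiS, hQ⟩, if_pos h2, div_self (pow_ne_zero _ (ne_of_gt ht))]
    · exact tendsto_const_nhds
  · rw [if_neg h2]
    have hdi : d i = dm m := by
      have := hdm_le m i hiS
      omega
    set n : ℝ := (((S m).filter (fun j => d j = dm m)).card : ℝ) with hn
    have hg : Filter.Tendsto
        (fun t : ℝ => -(∑ j ∈ (S m).filter (fun j => dm m < d j), t ^ (d j - d i)) / n)
        (𝓝[>] (0:ℝ)) (𝓝 0) := by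
      have hsum : Filter.Tendsto
          (fun t : ℝ => ∑ j ∈ (S m).filter (fun j => dm m < d j), t ^ (d j - d i))
          (𝓝[>] (0:ℝ)) (𝓝 0) := by
        have := tendsto_finset_sum ((S m).filter (fun j => dm m < d j))
          (f := fun j (t : ℝ) => t ^ (d j - d i)) (a := fun _ => (0:ℝ))
          (fun j hj => hpow (d j - d i) (by
            have := (Finset.mem_filter.1 hj).2
            omega))
        simpa using this
      have := (hsum.neg).div_const n
      simpa using this
    apply Filter.Tendsto.congr' (f₁ :=
      fun t : ℝ => -(∑ j ∈ (S m).filter (fun j => dm m < d j), t ^ (d j - d i)) / n)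
    · filter_upwards [hmem] with t ht
      have htne : t ≠ 0 := ne_of_gt ht
      rw [eta, if_pos ⟨hiS, hQ⟩, if_neg h2]
      have hR : (∑ j ∈ (S m).filter (fun j => dm m < d j), t ^ (d j - d i))
          = (∑ j ∈ (S m).filter (fun j => dm m < d j), t ^ d j) / t ^ d i := by
        rw [Finset.sum_div]
        apply Finset.sum_congr rfl
        intro j hj
        have hle : d i ≤ d j := by
          have := (Finset.mem_filter.1 hj).2
          omega
        rw [pow_sub₀ t htne hle, div_eq_mul_inv]
      rw [hR]
      ring
    · exact hg

end Propagation

-- ===================== PART D2 : pseudo-balance at maximizers =====================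

section Propagation2

open Filter Topology

variable {S : Fin M → Finset (Fin K)} {v : Fin M → Fin K → ℝ}

lemma gtildeC_max_pseudo (hS : ∀ m, 2 ≤ (S m).card) (hv : v ∈ PSet S)
    (hcov : ∀ i : Fin K, ∃ m, i ∈ S m) (i₀ : Fin K) {ω : Fin M → Fin K → ℝ}
    (hω : ω ∈ Gam S)
    (hmax : ∀ ω' ∈ Gam S, gtildeC S v (armClass S i₀) ω' ≤ gtildeC S v (armClass S i₀) ω) :
    ∀ i ∈ classFinset S i₀, Fq S v ω i = gtildeC S v (armClass S i₀) ω := by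
  classical
  have hQne : (classFinset S i₀).Nonempty := ⟨i₀, self_mem_classFinset S i₀⟩
  set g := gtildeC S v (armClass S i₀) ω with hg
  have hgpos : 0 < g :=
    lt_of_lt_of_le (gtildeC_unif_pos hS hv hcov i₀) (hmax (unif S) (unif_mem_Gam hS))
  have hpos : ∀ m, ∀ i ∈ S m, i ∈ classFinset S i₀ → 0 < ω m i :=
    pos_of_gtildeC_pos hω hgpos
  have hginf : g = (classFinset S i₀).inf' hQne (Fq S v ω) := gtildeC_of_pos i₀ hpos
  have hgle : ∀ i ∈ classFinset S i₀, g ≤ Fq S v ω i := by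
    intro i hi
    rw [hginf]
    exact Finset.inf'_le _ hi
  by_contra hcon
  push_neg at hcon
  obtain ⟨istar, histar, hnei⟩ := hcon
  set N := (classFinset S i₀).filter (fun i => g < Fq S v ω i) with hN
  have hNne : N.Nonempty := ⟨istar, Finset.mem_filter.2 ⟨histar,
    lt_of_le_of_ne (hgle istar histar) (Ne.symm hnei)⟩⟩
  have hreach : ∀ i ∈ classFinset S i₀, ∃ n, i ∈ Rset S N n := by
    intro i hi
    obtain ⟨iN, hiN⟩ := hNne
    have hiNQ : iN ∈ classFinset S i₀ := (Finset.mem_filter.1 hiN).1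
    have hEq : Relation.EqvGen (armRel S) i iN :=
      Relation.EqvGen.trans _ _ _ (Relation.EqvGen.symm _ _ (mem_classFinset.1 hi))
        (mem_classFinset.1 hiNQ)
    exact reach_Rset (eqvGen_to_rtg (armRel_symm S) hEq) hiN
  set d : Fin K → ℕ := distN S N with hd
  have hSm_ne : ∀ m, (S m).Nonempty := by
    intro m
    rw [← Finset.card_pos]
    have := hS m
    omega
  set dm : Fin M → ℕ := fun m => (S m).inf' (hSm_ne m) d with hdm
  have hdm_le : ∀ m, ∀ i ∈ S m, dm m ≤ d i := fun m i hi => Finset.inf'_le _ hi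
  have hdm_att : ∀ m, ∃ i ∈ S m, d i = dm m := by
    intro m
    obtain ⟨i, hi, hieq⟩ := Finset.exists_mem_eq_inf' (hSm_ne m) d
    exact ⟨i, hi, hieq.symm⟩
  set pert : ℝ → (Fin M → Fin K → ℝ) :=
    fun t m i => ω m i + eta S (classFinset S i₀) d dm m i t with hpert
  have hDelta2 : ∀ i : Fin K, (0:ℝ) < (Delta S v i) ^ 2 := by
    intro i
    have := Delta_pos hS hv hcov i
    positivity
  -- key per-arm eventual statement
  have harm : ∀ i ∈ classFinset S i₀, ∀ᶠ t in 𝓝[>] (0:ℝ),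
      (∀ m, i ∈ S m → 0 < pert t m i) ∧ g < Fq S v (pert t) i := by
    intro i hiQ
    have hQsub : ∀ m, i ∈ S m → S m ⊆ classFinset S i₀ :=
      fun m hm => subset_classFinset_of_mem hm hiQ
    have hco : ∀ m, Filter.Tendsto (fun t => pert t m i) (𝓝[>] (0:ℝ)) (𝓝 (ω m i)) := by
      intro m
      simp only [hpert]
      simpa using tendsto_const_nhds.add (eta_tendsto_zero (S := S)
        (Qf := classFinset S i₀) (d := d) (dm := dm) m i)
    have hposev : ∀ᶠ t in 𝓝[>] (0:ℝ), ∀ m, i ∈ S m → 0 < pert t m i := by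
      have h1 : ∀ᶠ t in 𝓝[>] (0:ℝ), ∀ m ∈ Finset.univ, i ∈ S m → 0 < pert t m i := by
        rw [Filter.eventually_all_finset]
        intro m _
        by_cases him : i ∈ S m
        · have h2 := (hco m).eventually (eventually_gt_nhds (hpos m i him hiQ))
          filter_upwards [h2] with t h3 _
          exact h3
        · filter_upwards with t h3
          exact absurd h3 him
      filter_upwards [h1] with t h2 m
      exact h2 m (Finset.mem_univ m)
    by_cases hiN : i ∈ N
    · -- non-binding arm : continuity
      have hFlt : g < Fq S v ω i := (Finset.mem_filter.1 hiN).2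
      have hsumT : Filter.Tendsto (fun t => ∑ m ∈ clients S i, 1 / pert t m i)
          (𝓝[>] (0:ℝ)) (𝓝 (∑ m ∈ clients S i, 1 / ω m i)) :=
        tendsto_finset_sum _ (fun m hm => tendsto_const_nhds.div (hco m)
          (ne_of_gt (hpos m i (mem_clients.1 hm) hiQ)))
      have hdenT : Filter.Tendsto (fun t => armDenom S (pert t) i) (𝓝[>] (0:ℝ))
          (𝓝 (armDenom S ω i)) := by
        simp only [armDenom_def]
        exact tendsto_const_nhds.mul hsumT
      have hFqT : Filter.Tendsto (fun t => Fq S v (pert t) i) (𝓝[>] (0:ℝ))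
          (𝓝 (Fq S v ω i)) := by
        simp only [Fq]
        exact tendsto_const_nhds.div hdenT
          (armDenom_pos hcov (fun m hm => hpos m i hm hiQ)).ne'
      have hev2 := hFqT.eventually (eventually_gt_nhds hFlt)
      exact hposev.and hev2
    · -- binding arm : strict improvement
      have hdiNe : d i ≠ 0 := by
        intro h0
        exact hiN (distN_zero_mem (hreach i hiQ) h0)
      have hFeq : Fq S v ω i = g := by
        refine le_antisymm ?_ (hgle i hiQ)
        by_contra hlt
        push_neg at hlt
        exact hiN (Finset.mem_filter.2 ⟨hiQ, hlt⟩)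
      obtain ⟨j, hrel, hjd⟩ := distN_step (hreach i hiQ) hdiNe
      obtain ⟨mstar, himstar, hjmstar⟩ := hrel
      have hmstar_lt : dm mstar < d i := lt_of_le_of_lt (hdm_le mstar j hjmstar) hjd
      have hL2 := sumInv_perturb (clients S i) (fun m => ω m i)
        (fun m hm => hpos m i (mem_clients.1 hm) hiQ)
        (fun m t => eta S (classFinset S i₀) d dm m i t)
        (fun m => if dm m < d i then 1 else 0) (d i)
        (fun m hm => eta_div_tendsto hdm_le m i (mem_clients.1 hm)
          (hQsub m (mem_clients.1 hm)))
        (fun m hm => eta_tendsto_zero m i)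
        (by
          apply Finset.sum_pos'
          · intro m hm
            by_cases h : dm m < d i
            · have hx := hpos m i (mem_clients.1 hm) hiQ
              simp only [if_pos h]
              positivity
            · simp only [if_neg h]
              simp
          · refine ⟨mstar, mem_clients.2 himstar, ?_⟩
            have hx := hpos mstar i himstar hiQ
            simp only [if_pos hmstar_lt]
            positivity)
      filter_upwards [hL2, hposev] with t hL2t hpt
      obtain ⟨hp, hlt⟩ := hL2t
      refine ⟨hpt, ?_⟩
      have hsum_eq : ∑ m ∈ clients S i, 1 / pert t m i
          = ∑ m ∈ clients S i, 1 / (ω m i + eta S (classFinset S i₀) d dm m i t) := by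
        apply Finset.sum_congr rfl
        intro m hm
        simp only [hpert]
      have hsum_pos : 0 < ∑ m ∈ clients S i, 1 / pert t m i := by
        apply Finset.sum_pos
        · intro m hm
          have := hpt m (mem_clients.1 hm)
          positivity
        · exact clients_nonempty hcov i
      have harm_lt : armDenom S (pert t) i < armDenom S ω i := by
        rw [armDenom_def, armDenom_def]
        apply mul_lt_mul_of_pos_left _ (by
          have := Mi_cast_pos hcov i
          positivity)
        rw [hsum_eq]
        exact hlt
      have harm_pos : 0 < armDenom S (pert t) i := by
        rw [armDenom_def]
        have h2 := Mi_cast_pos hcov i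
        positivity
      have hfi : Fq S v ω i < Fq S v (pert t) i := by
        rw [Fq, Fq]
        exact div_lt_div_of_pos_left (hDelta2 i) harm_pos harm_lt
      rw [hFeq] at hfi
      exact hfi
  -- combine over all arms of the class
  have hall : ∀ᶠ t in 𝓝[>] (0:ℝ), ∀ i ∈ classFinset S i₀,
      (∀ m, i ∈ S m → 0 < pert t m i) ∧ g < Fq S v (pert t) i := by
    rw [Filter.eventually_all_finset]
    exact harm
  obtain ⟨t, htQ, htpos⟩ := (hall.and eventually_mem_nhdsWithin).exists
  -- the perturbed point is feasible
  have hpertGam : pert t ∈ Gam S := by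
    refine ⟨?_, ?_, ?_⟩
    · intro m i hiS
      by_cases hQm : S m ⊆ classFinset S i₀
      · exact ((htQ i (hQm hiS)).1 m hiS).le
      · have he : eta S (classFinset S i₀) d dm m i t = 0 := by
          rw [eta, if_neg (by tauto)]
        simp only [hpert, he, add_zero]
        exact hω.1 m i hiS
    · intro m
      have h1 : ∑ i ∈ S m, pert t m i
          = ∑ i ∈ S m, ω m i + ∑ i ∈ S m, eta S (classFinset S i₀) d dm m i t := by
        simp only [hpert]
        rw [Finset.sum_add_distrib]
      rw [h1, hω.2.1 m, eta_sum_zero hdm_le hdm_att m t]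
      ring
    · intro m i hiS
      have h1 : eta S (classFinset S i₀) d dm m i t = 0 := by
        rw [eta, if_neg (fun hc => hiS hc.1)]
      simp only [hpert, h1, add_zero]
      exact hω.2.2 m i hiS
  have hcontra := hmax (pert t) hpertGam
  have hpertpos : ∀ m, ∀ i ∈ S m, i ∈ classFinset S i₀ → 0 < pert t m i :=
    fun m i hiS hiQ => (htQ i hiQ).1 m hiS
  rw [gtildeC_of_pos i₀ hpertpos] at hcontra
  obtain ⟨i', hi', heq'⟩ := Finset.exists_mem_eq_inf' hQne (Fq S v (pert t))
  rw [heq'] at hcontra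
  exact absurd hcontra (not_le.2 (htQ i' hi').2)

end Propagation2

-- ===================== PART E : balanced condition =====================

section Balanced

open Filter Topology

variable {S : Fin M → Finset (Fin K)} {v : Fin M → Fin K → ℝ}

lemma armDenom_congr {ω₁ ω₂ : Fin M → Fin K → ℝ} (i : Fin K)
    (h : ∀ m, i ∈ S m → ω₁ m i = ω₂ m i) : armDenom S ω₁ i = armDenom S ω₂ i := by
  rw [armDenom_def, armDenom_def]
  congr 1
  apply Finset.sum_congr rfl
  intro m hm
  rw [h m (mem_clients.1 hm)]

lemma sum_eq_pair {α : Type*} [DecidableEq α] {f : α → ℝ} {t : Finset α} {a b : α}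
    (ha : a ∈ t) (hb : b ∈ t) (hab : a ≠ b)
    (h0 : ∀ x ∈ t, x ≠ a → x ≠ b → f x = 0) :
    ∑ x ∈ t, f x = f a + f b := by
  have hsub : ({a, b} : Finset α) ⊆ t := by
    intro x hx
    rcases Finset.mem_insert.1 hx with rfl | hx
    · exact ha
    · rw [Finset.mem_singleton.1 hx]
      exact hb
  rw [← Finset.sum_subset hsub]
  · exact Finset.sum_pair hab
  · intro x hx hxp
    refine h0 x hx ?_ ?_
    · intro h
      subst h
      exact hxp (Finset.mem_insert_self x {b})
    · intro h
      subst h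
      exact hxp (Finset.mem_insert_of_mem (Finset.mem_singleton_self x))

lemma balanced_of_max (hS : ∀ m, 2 ≤ (S m).card) (hv : v ∈ PSet S)
    (hcov : ∀ i : Fin K, ∃ m, i ∈ S m) {ω : Fin M → Fin K → ℝ} (hω : ω ∈ Gam S)
    (hmaxAll : ∀ i : Fin K, ∀ ω' ∈ Gam S,
      gtildeC S v (armClass S i) ω' ≤ gtildeC S v (armClass S i) ω)
    (hposAll : ∀ m, ∀ i ∈ S m, 0 < ω m i) :
    BalancedCond S ω := by
  classical
  intro m₁ m₂ i₁ i₂ h11 h21 h12 h22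
  rcases eq_or_ne m₁ m₂ with rfl | hm
  · rfl
  rcases eq_or_ne i₁ i₂ with rfl | hii
  · rw [div_self (hposAll m₁ i₁ h11).ne', div_self (hposAll m₂ i₁ h12).ne']
  by_contra hne
  have hQne : (classFinset S i₁).Nonempty := ⟨i₁, self_mem_classFinset S i₁⟩
  have hi2Q : i₂ ∈ classFinset S i₁ :=
    classFinset_closed (self_mem_classFinset S i₁) ⟨m₁, h11, h21⟩
  have hi1Q : i₁ ∈ classFinset S i₁ := self_mem_classFinset S i₁
  have hmax := hmaxAll i₁
  set g := gtildeC S v (armClass S i₁) ω with hgdef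
  have hpseudo : ∀ i ∈ classFinset S i₁, Fq S v ω i = g :=
    gtildeC_max_pseudo hS hv hcov i₁ hω hmax
  have hgpos : 0 < g :=
    lt_of_lt_of_le (gtildeC_unif_pos hS hv hcov i₁) (hmax (unif S) (unif_mem_Gam hS))
  have hx₁p : 0 < ω m₁ i₁ := hposAll m₁ i₁ h11
  have hx₂p : 0 < ω m₂ i₁ := hposAll m₂ i₁ h12
  have hy₁p : 0 < ω m₁ i₂ := hposAll m₁ i₂ h21
  have hy₂p : 0 < ω m₂ i₂ := hposAll m₂ i₂ h22
  set x₁ := ω m₁ i₁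
  set x₂ := ω m₂ i₁
  set y₁ := ω m₁ i₂
  set y₂ := ω m₂ i₂
  set D := (1/x₁^2) * (1/y₂^2) - (1/x₂^2) * (1/y₁^2) with hD
  have hDne : D ≠ 0 := by
    intro h0
    apply hne
    have h2 : (1/x₁^2) * (1/y₂^2) = (1/x₂^2) * (1/y₁^2) := by
      rw [hD] at h0
      linarith
    have h1 : (x₁ * y₂)^2 = (x₂ * y₁)^2 := by
      field_simp at h2
      nlinarith [h2]
    have h3 : (x₁ * y₂ - x₂ * y₁) * (x₁ * y₂ + x₂ * y₁) = 0 := by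
      linear_combination h1
    rcases mul_eq_zero.1 h3 with h4 | h4
    · rw [div_eq_div_iff hy₁p.ne' hy₂p.ne']
      linarith
    · nlinarith
  set s₀ : ℝ := if 0 < D then 1 else -1 with hs₀
  have hDs : 0 < D * s₀ := by
    rcases lt_trichotomy 0 D with h | h | h
    · rw [hs₀, if_pos h]
      linarith
    · exact absurd h.symm hDne
    · rw [hs₀, if_neg (by linarith)]
      linarith
  set a₁ := (1/y₂^2 + 1/x₂^2) * s₀ with ha₁
  set a₂ := -(1/x₁^2 + 1/y₁^2) * s₀ with ha₂
  have hu : a₁ * (1/x₁^2) + a₂ * (1/x₂^2) = D * s₀ := by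
    rw [ha₁, ha₂, hD]
    ring
  have hw : a₁ * (1/y₁^2) + a₂ * (1/y₂^2) = -(D * s₀) := by
    rw [ha₁, ha₂, hD]
    ring
  -- perturbation coefficients
  set b : Fin M → Fin K → ℝ := fun m i =>
    if m = m₁ ∧ i = i₁ then a₁ else if m = m₂ ∧ i = i₁ then a₂
    else if m = m₁ ∧ i = i₂ then -a₁ else if m = m₂ ∧ i = i₂ then -a₂ else 0 with hb
  have hb1 : ∀ m, b m i₁ = if m = m₁ then a₁ else if m = m₂ then a₂ else 0 := by
    intro m
    simp only [hb]
    simp [hii]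
  have hb2 : ∀ m, b m i₂ = if m = m₁ then -a₁ else if m = m₂ then -a₂ else 0 := by
    intro m
    simp only [hb]
    simp [Ne.symm hii]
  have hbo : ∀ m i, i ≠ i₁ → i ≠ i₂ → b m i = 0 := by
    intro m i hA hB
    simp only [hb]
    simp [hA, hB]
  have hbm : ∀ m, m ≠ m₁ → m ≠ m₂ → ∀ i, b m i = 0 := by
    intro m hA hB i
    simp only [hb]
    simp [hA, hB]
  have hbsum : ∀ m, ∑ i ∈ S m, b m i = 0 := by
    intro m
    by_cases h1 : m = m₁
    · subst h1
      rw [sum_eq_pair h11 h21 hii (fun i _ hA hB => hbo m i hA hB)]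
      rw [hb1, hb2]
      simp
    · by_cases h2 : m = m₂
      · subst h2
        rw [sum_eq_pair h12 h22 hii (fun i _ hA hB => hbo m i hA hB)]
        rw [hb1, hb2]
        simp [h1]
      · exact Finset.sum_eq_zero (fun i _ => hbm m h1 h2 i)
  -- sums of coefficients for the two arms
  have hm1c1 : m₁ ∈ clients S i₁ := mem_clients.2 h11
  have hm2c1 : m₂ ∈ clients S i₁ := mem_clients.2 h12
  have hm1c2 : m₁ ∈ clients S i₂ := mem_clients.2 h21
  have hm2c2 : m₂ ∈ clients S i₂ := mem_clients.2 h22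
  have hsum1 : ∑ m ∈ clients S i₁, (b m i₁) / (ω m i₁)^2 = D * s₀ := by
    rw [sum_eq_pair hm1c1 hm2c1 hm (fun m _ hA hB => by rw [hbm m hA hB i₁, zero_div])]
    rw [hb1 m₁, hb1 m₂]
    rw [if_pos rfl, if_neg (Ne.symm hm), if_pos rfl]
    rw [← hu]
    ring
  have hsum2 : ∑ m ∈ clients S i₂, (b m i₂) / (ω m i₂)^2 = D * s₀ := by
    rw [sum_eq_pair hm1c2 hm2c2 hm (fun m _ hA hB => by rw [hbm m hA hB i₂, zero_div])]
    rw [hb2 m₁, hb2 m₂]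
    rw [if_pos rfl, if_neg (Ne.symm hm), if_pos rfl]
    have : -a₁ / y₁ ^ 2 + -a₂ / y₂ ^ 2 = -(a₁ * (1/y₁^2) + a₂ * (1/y₂^2)) := by ring
    rw [this, hw]
    ring
  -- eventual improvement for an arm
  have hEv : ∀ (iX : Fin K),
      (0 < ∑ m ∈ clients S iX, (b m iX) / (ω m iX)^2) →
      ∀ᶠ t in 𝓝[>] (0:ℝ), (∀ m ∈ clients S iX, 0 < ω m iX + t * b m iX) ∧
        ∑ m ∈ clients S iX, 1 / (ω m iX + t * b m iX) < ∑ m ∈ clients S iX, 1 / ω m iX := by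
    intro iX hcsum
    apply sumInv_perturb (clients S iX) (fun m => ω m iX)
      (fun m hm' => hposAll m iX (mem_clients.1 hm'))
      (fun m t => t * b m iX) (fun m => b m iX) 1
    · intro m _
      have hev : ∀ᶠ t in 𝓝[>] (0:ℝ), b m iX = t * b m iX / t ^ 1 := by
        filter_upwards [eventually_mem_nhdsWithin] with t ht
        have htne : (t:ℝ) ≠ 0 := ne_of_gt ht
        field_simp
      exact Filter.Tendsto.congr' hev tendsto_const_nhds
    · intro m _
      have h5 : Filter.Tendsto (fun t : ℝ => t * b m iX) (𝓝 0) (𝓝 0) := by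
        have h6 := (tendsto_id (x := 𝓝 (0:ℝ))).mul_const (b m iX)
        rw [zero_mul] at h6
        exact h6
      exact h5.mono_left nhdsWithin_le_nhds
    · exact hcsum
  have hEv1 := hEv i₁ (hsum1 ▸ hDs)
  have hEv2 := hEv i₂ (hsum2 ▸ hDs)
  obtain ⟨t, ⟨⟨hp1, hlt1⟩, ⟨hp2, hlt2⟩⟩, htpos⟩ :=
    ((hEv1.and hEv2).and eventually_mem_nhdsWithin).exists
  -- the perturbed allocation
  set ω' : Fin M → Fin K → ℝ := fun m i => ω m i + t * b m i with hω'
  have hω'eq : ∀ m i, i ≠ i₁ → i ≠ i₂ → ω' m i = ω m i := by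
    intro m i hA hB
    simp only [hω']
    rw [hbo m i hA hB]
    ring
  have hω'pos : ∀ m, ∀ i ∈ S m, 0 < ω' m i := by
    intro m i hiS
    by_cases hA : i = i₁
    · subst hA
      exact hp1 m (mem_clients.2 hiS)
    · by_cases hB : i = i₂
      · subst hB
        exact hp2 m (mem_clients.2 hiS)
      · rw [hω'eq m i hA hB]
        exact hposAll m i hiS
  have hω'Gam : ω' ∈ Gam S := by
    refine ⟨fun m i hiS => (hω'pos m i hiS).le, fun m => ?_, fun m i hiS => ?_⟩
    · have h6 : ∑ i ∈ S m, ω' m i = ∑ i ∈ S m, ω m i + t * ∑ i ∈ S m, b m i := by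
        simp only [hω']
        rw [Finset.sum_add_distrib, Finset.mul_sum]
      rw [h6, hω.2.1 m, hbsum m]
      ring
    · have hbz : b m i = 0 := by
        by_cases hA : m = m₁
        · subst hA
          exact hbo m i (fun h => hiS (h ▸ h11)) (fun h => hiS (h ▸ h21))
        · by_cases hB : m = m₂
          · subst hB
            exact hbo m i (fun h => hiS (h ▸ h12)) (fun h => hiS (h ▸ h22))
          · exact hbm m hA hB i
      simp only [hω']
      rw [hbz, hω.2.2 m i hiS]
      ring
  -- F-values : unchanged off the two arms, strictly increased on them
  have hDelta2 : ∀ i : Fin K, (0:ℝ) < (Delta S v i) ^ 2 := by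
    intro i
    have := Delta_pos hS hv hcov i
    positivity
  have hFq_other : ∀ i, i ≠ i₁ → i ≠ i₂ → Fq S v ω' i = Fq S v ω i := by
    intro i hA hB
    rw [Fq, Fq, armDenom_congr i (fun m _ => hω'eq m i hA hB)]
  have harmlt : ∀ iX : Fin K,
      (∑ m ∈ clients S iX, 1 / (ω m iX + t * b m iX) < ∑ m ∈ clients S iX, 1 / ω m iX) →
      armDenom S ω' iX < armDenom S ω iX := by
    intro iX hlt
    rw [armDenom_def, armDenom_def]
    apply mul_lt_mul_of_pos_left _ (by
      have := Mi_cast_pos hcov iX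
      positivity)
    exact hlt
  have harmpos : ∀ iX : Fin K, (∃ m, iX ∈ S m) → 0 < armDenom S ω' iX := by
    intro iX _
    exact armDenom_pos hcov (fun m hm' => hω'pos m iX hm')
  have hF1 : g < Fq S v ω' i₁ := by
    have h7 : Fq S v ω i₁ < Fq S v ω' i₁ := by
      rw [Fq, Fq]
      exact div_lt_div_of_pos_left (hDelta2 i₁) (harmpos i₁ ⟨m₁, h11⟩) (harmlt i₁ hlt1)
    rw [hpseudo i₁ hi1Q] at h7
    exact h7
  have hF2 : g < Fq S v ω' i₂ := by
    have h7 : Fq S v ω i₂ < Fq S v ω' i₂ := by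
      rw [Fq, Fq]
      exact div_lt_div_of_pos_left (hDelta2 i₂) (harmpos i₂ ⟨m₁, h21⟩) (harmlt i₂ hlt2)
    rw [hpseudo i₂ hi2Q] at h7
    exact h7
  -- ω' is also a maximizer
  have hgt' : g ≤ gtildeC S v (armClass S i₁) ω' := by
    rw [gtildeC_of_pos i₁ (fun m i hiS _ => hω'pos m i hiS)]
    apply Finset.le_inf'
    intro i hiQ
    by_cases hA : i = i₁
    · subst hA
      exact hF1.le
    · by_cases hB : i = i₂
      · subst hB
        exact hF2.le
      · rw [hFq_other i hA hB, hpseudo i hiQ]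
  have hle' : gtildeC S v (armClass S i₁) ω' ≤ g := hmax ω' hω'Gam
  have heq' : gtildeC S v (armClass S i₁) ω' = g := le_antisymm hle' hgt'
  have hmax' : ∀ ω'' ∈ Gam S,
      gtildeC S v (armClass S i₁) ω'' ≤ gtildeC S v (armClass S i₁) ω' := by
    intro ω'' h
    rw [heq']
    exact hmax ω'' h
  have hps' := gtildeC_max_pseudo hS hv hcov i₁ hω'Gam hmax'
  have hcontr := hps' i₁ hi1Q
  rw [heq'] at hcontr
  exact absurd hcontr (ne_of_gt hF1)
end Balanced

-- ===================== PART F1 : common solution existence =====================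

section Common

open Filter Topology

variable {S : Fin M → Finset (Fin K)} {v : Fin M → Fin K → ℝ}

lemma gtildeC_congr (i₀ : Fin K) {ω₁ ω₂ : Fin M → Fin K → ℝ}
    (h : ∀ m, ∀ i, i ∈ S m → i ∈ classFinset S i₀ → ω₁ m i = ω₂ m i) :
    gtildeC S v (armClass S i₀) ω₁ = gtildeC S v (armClass S i₀) ω₂ := by
  have hden : ∀ i ∈ classFinset S i₀, armDenom S ω₁ i = armDenom S ω₂ i := by
    intro i hiQ
    exact armDenom_congr i (fun m hm => h m i hm hiQ)
  have hcond : (∃ m, ∃ i ∈ S m, i ∈ armClass S i₀ ∧ ω₁ m i = 0)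
      ↔ (∃ m, ∃ i ∈ S m, i ∈ armClass S i₀ ∧ ω₂ m i = 0) := by
    constructor
    · rintro ⟨m, i, hiS, hiQ, h0⟩
      exact ⟨m, i, hiS, hiQ, by rw [← h m i hiS (mem_armClass_iff.1 hiQ)]; exact h0⟩
    · rintro ⟨m, i, hiS, hiQ, h0⟩
      exact ⟨m, i, hiS, hiQ, by rw [h m i hiS (mem_armClass_iff.1 hiQ)]; exact h0⟩
  by_cases hc : ∃ m, ∃ i ∈ S m, i ∈ armClass S i₀ ∧ ω₁ m i = 0
  · rw [gtildeC, if_pos hc, gtildeC, if_pos (hcond.1 hc)]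
  · rw [gtildeC, if_neg hc, gtildeC, if_neg (fun h2 => hc (hcond.2 h2))]
    congr 1
    ext x
    constructor
    · rintro ⟨i, hiQ, rfl⟩
      exact ⟨i, hiQ, by rw [hden i (mem_armClass_iff.1 hiQ)]⟩
    · rintro ⟨i, hiQ, rfl⟩
      exact ⟨i, hiQ, by rw [hden i (mem_armClass_iff.1 hiQ)]⟩

lemma gtilde_unif_pos (hK0 : 0 < K) (hS : ∀ m, 2 ≤ (S m).card) (hv : v ∈ PSet S)
    (hcov : ∀ i : Fin K, ∃ m, i ∈ S m) :
    0 < gtilde S v (unif S) := by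
  rw [gtilde_of_pos hK0 (fun m i hi => unif_pos m hi)]
  apply (Finset.lt_inf'_iff _).2
  intro i _
  have := Fq_pos hS hv hcov (fun m hm => unif_pos m hm) (i := i)
  positivity

lemma exists_commonSol (hK : 2 ≤ K) (hS : ∀ m, 2 ≤ (S m).card) (hv : v ∈ PSet S)
    (hcov : ∀ i : Fin K, ∃ m, i ∈ S m) :
    ∃ ω, IsCommonSol S v ω := by
  classical
  have hK0 : 0 < K := by omega
  have hSm_ne : ∀ m, (S m).Nonempty := by
    intro m
    rw [← Finset.card_pos]
    have := hS m
    omega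
  set pickF : Set (Fin K) → (Fin M → Fin K → ℝ) := fun Q =>
    if h : ∃ ω ∈ Gam S, ∀ ω' ∈ Gam S, gtildeC S v Q ω' ≤ gtildeC S v Q ω then h.choose
    else unif S with hpickF
  have hpick : ∀ i₀ : Fin K, pickF (armClass S i₀) ∈ Gam S ∧
      ∀ ω' ∈ Gam S, gtildeC S v (armClass S i₀) ω'
        ≤ gtildeC S v (armClass S i₀) (pickF (armClass S i₀)) := by
    intro i₀
    have h := exists_gtildeC_max hS hv hcov i₀
    simp only [hpickF, dif_pos h]
    exact h.choose_spec
  set base : Fin M → Fin K := fun m => (hSm_ne m).choose with hbase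
  have hbaseS : ∀ m, base m ∈ S m := fun m => (hSm_ne m).choose_spec
  set ωstar : Fin M → Fin K → ℝ := fun m => pickF (armClass S (base m)) m with hωstar
  have hωstarGam : ωstar ∈ Gam S := by
    refine ⟨fun m i hi => (hpick (base m)).1.1 m i hi, fun m => (hpick (base m)).1.2.1 m,
      fun m i hi => (hpick (base m)).1.2.2 m i hi⟩
  have hcoh : ∀ i₀ : Fin K, ∀ m : Fin M, (∃ i ∈ S m, i ∈ classFinset S i₀) →
      ∀ i, ωstar m i = pickF (armClass S i₀) m i := by
    intro i₀ m ⟨i, hiS, hiQ⟩ j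
    have hbQ : base m ∈ classFinset S i₀ :=
      subset_classFinset_of_mem hiS hiQ (hbaseS m)
    have hcls : armClass S i₀ = armClass S (base m) := armClass_eq (mem_classFinset.1 hbQ)
    simp only [hωstar]
    rw [hcls]
  have hstarmax : ∀ i₀ : Fin K, ∀ ω' ∈ Gam S,
      gtildeC S v (armClass S i₀) ω' ≤ gtildeC S v (armClass S i₀) ωstar := by
    intro i₀ ω' hω'
    have hcongr : gtildeC S v (armClass S i₀) ωstar
        = gtildeC S v (armClass S i₀) (pickF (armClass S i₀)) :=
      gtildeC_congr i₀ (fun m i hiS hiQ => hcoh i₀ m ⟨i, hiS, hiQ⟩ i)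
    rw [hcongr]
    exact (hpick i₀).2 ω' hω'
  have hstarpos : ∀ m, ∀ i ∈ S m, 0 < ωstar m i := by
    intro m i hiS
    have hpos' : 0 < gtildeC S v (armClass S i) ωstar :=
      lt_of_lt_of_le (gtildeC_unif_pos hS hv hcov i)
        (hstarmax i (unif S) (unif_mem_Gam hS))
    exact pos_of_gtildeC_pos hωstarGam hpos' m i hiS (self_mem_classFinset S i)
  have hgt : ∀ ω' ∈ Gam S, gtilde S v ω' ≤ gtilde S v ωstar := by
    intro ω' hω'
    by_cases hz : ∃ m, ∃ i ∈ S m, ω' m i = 0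
    · rw [gtilde_zero hz, gtilde_of_pos hK0 hstarpos]
      apply Finset.le_inf'
      intro i _
      have := Fq_pos hS hv hcov (fun m hm => hstarpos m i hm)
      linarith
    · push_neg at hz
      have hpos' : ∀ m, ∀ i ∈ S m, 0 < ω' m i :=
        fun m i hi => (hω'.1 m i hi).lt_of_ne' (hz m i hi)
      rw [gtilde_of_pos hK0 hpos', gtilde_of_pos hK0 hstarpos]
      obtain ⟨idag, _, hdag⟩ := Finset.exists_mem_eq_inf'
        (⟨⟨0, hK0⟩, Finset.mem_univ _⟩ : (Finset.univ : Finset (Fin K)).Nonempty)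
        (fun i => Fq S v ωstar i / 2)
      rw [hdag]
      have hQne : (classFinset S idag).Nonempty := ⟨idag, self_mem_classFinset S idag⟩
      have hpos'Q : ∀ m, ∀ i ∈ S m, i ∈ classFinset S idag → 0 < ω' m i :=
        fun m i h _ => hpos' m i h
      have h1 : gtildeC S v (armClass S idag) ω' ≤ gtildeC S v (armClass S idag) ωstar :=
        hstarmax idag ω' hω'
      obtain ⟨j, hjQ, hjeq⟩ := Finset.exists_mem_eq_inf' hQne (Fq S v ω')
      calc Finset.univ.inf' (⟨⟨0, hK0⟩, Finset.mem_univ _⟩) (fun i => Fq S v ω' i / 2)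
          ≤ Fq S v ω' j / 2 := Finset.inf'_le _ (Finset.mem_univ j)
        _ = gtildeC S v (armClass S idag) ω' / 2 := by
            rw [gtildeC_of_pos idag hpos'Q, hjeq]
        _ ≤ gtildeC S v (armClass S idag) ωstar / 2 := by linarith
        _ ≤ Fq S v ωstar idag / 2 := by
            rw [gtildeC_of_pos idag (fun m i h _ => hstarpos m i h)]
            have := Finset.inf'_le (Fq S v ωstar) (self_mem_classFinset S idag)
            linarith
  exact ⟨ωstar, hωstarGam, hgt, fun i ω' h => hstarmax i ω' h⟩

end Common

-- ===================== PART F2 : uniqueness =====================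

section Unique

open Filter Topology

variable {S : Fin M → Finset (Fin K)} {v : Fin M → Fin K → ℝ}

lemma commonSol_pos (hK0 : 0 < K) (hS : ∀ m, 2 ≤ (S m).card) (hv : v ∈ PSet S)
    (hcov : ∀ i : Fin K, ∃ m, i ∈ S m) {ω : Fin M → Fin K → ℝ}
    (h : IsCommonSol S v ω) : ∀ m, ∀ i ∈ S m, 0 < ω m i := by
  intro m i hiS
  rcases (h.1.1 m i hiS).lt_or_eq with hlt | heq
  · exact hlt
  · exfalso
    have h0 : gtilde S v ω = 0 := gtilde_zero ⟨m, i, hiS, heq.symm⟩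
    have h1 := h.2.1 (unif S) (unif_mem_Gam hS)
    have h2 := gtilde_unif_pos hK0 hS hv hcov
    rw [h0] at h1
    linarith

lemma commonSol_unique (hK0 : 0 < K) (hS : ∀ m, 2 ≤ (S m).card) (hv : v ∈ PSet S)
    (hcov : ∀ i : Fin K, ∃ m, i ∈ S m) {ω ω' : Fin M → Fin K → ℝ}
    (h : IsCommonSol S v ω) (h' : IsCommonSol S v ω') : ω = ω' := by
  classical
  have hpos := commonSol_pos hK0 hS hv hcov h
  have hpos' := commonSol_pos hK0 hS hv hcov h'
  funext m i
  by_cases hiS : i ∈ S m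
  swap
  · rw [h.1.2.2 m i hiS, h'.1.2.2 m i hiS]
  have hiQ : i ∈ classFinset S i := self_mem_classFinset S i
  have hQne : (classFinset S i).Nonempty := ⟨i, hiQ⟩
  have hmaxω := h.2.2 i
  have hmaxω' := h'.2.2 i
  set g := gtildeC S v (armClass S i) ω with hgdef
  have hgeq : gtildeC S v (armClass S i) ω' = g :=
    le_antisymm (hmaxω ω' h'.1) (hmaxω' ω h.1)
  have hps := gtildeC_max_pseudo hS hv hcov i h.1 hmaxω
  have hmaxω'2 : ∀ ω'' ∈ Gam S,
      gtildeC S v (armClass S i) ω'' ≤ gtildeC S v (armClass S i) ω' :=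
    fun ω'' hh => (hmaxω ω'' hh).trans_eq hgeq.symm
  have hps' := gtildeC_max_pseudo hS hv hcov i h'.1 hmaxω'2
  have hgpos : 0 < g :=
    lt_of_lt_of_le (gtildeC_unif_pos hS hv hcov i) (hmaxω (unif S) (unif_mem_Gam hS))
  -- armDenoms agree on the class
  have hdenpos : ∀ j ∈ classFinset S i, 0 < armDenom S ω j :=
    fun j _ => armDenom_pos hcov (fun mm hm => hpos mm j hm)
  have hdenpos' : ∀ j ∈ classFinset S i, 0 < armDenom S ω' j :=
    fun j _ => armDenom_pos hcov (fun mm hm => hpos' mm j hm)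
  have hden : ∀ j ∈ classFinset S i, armDenom S ω j = armDenom S ω' j := by
    intro j hj
    have e1 : Fq S v ω j = g := hps j hj
    have e2 : Fq S v ω' j = g := by rw [hps' j hj, hgeq]
    rw [Fq, div_eq_iff (hdenpos j hj).ne'] at e1
    rw [Fq, div_eq_iff (hdenpos' j hj).ne'] at e2
    apply mul_left_cancel₀ hgpos.ne'
    linarith [e1, e2]
  have hMine : ∀ j : Fin K, (1 / (Mi S j : ℝ) ^ 2) ≠ 0 := by
    intro j
    have := Mi_cast_pos hcov j
    positivity
  have hsum : ∀ j ∈ classFinset S i,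
      ∑ mm ∈ clients S j, 1 / ω mm j = ∑ mm ∈ clients S j, 1 / ω' mm j := by
    intro j hj
    have hd := hden j hj
    rw [armDenom_def, armDenom_def] at hd
    exact mul_left_cancel₀ (hMine j) hd
  -- the midpoint allocation
  set ωm : Fin M → Fin K → ℝ := fun mm jj => (ω mm jj + ω' mm jj) / 2 with hωm
  have hωmpos : ∀ mm, ∀ j ∈ S mm, 0 < ωm mm j := by
    intro mm j hj
    have := hpos mm j hj
    have := hpos' mm j hj
    simp only [hωm]
    linarith
  have hωmGam : ωm ∈ Gam S := by
    refine ⟨fun mm j hj => (hωmpos mm j hj).le, fun mm => ?_, fun mm j hj => ?_⟩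
    · simp only [hωm]
      rw [← Finset.sum_div, Finset.sum_add_distrib, h.1.2.1 mm, h'.1.2.1 mm]
      norm_num
    · simp only [hωm]
      rw [h.1.2.2 mm j hj, h'.1.2.2 mm j hj]
      norm_num
  have hmidle : ∀ j ∈ classFinset S i, ∀ mm ∈ clients S j,
      1 / ωm mm j ≤ (1 / ω mm j + 1 / ω' mm j) / 2 := by
    intro j _ mm hm
    have h1 := hpos mm j (mem_clients.1 hm)
    have h2 := hpos' mm j (mem_clients.1 hm)
    simp only [hωm]
    exact inv_midpoint_le h1 h2
  have hsum_mid_le : ∀ j ∈ classFinset S i,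
      ∑ mm ∈ clients S j, 1 / ωm mm j ≤ ∑ mm ∈ clients S j, 1 / ω mm j := by
    intro j hj
    calc ∑ mm ∈ clients S j, 1 / ωm mm j
        ≤ ∑ mm ∈ clients S j, (1 / ω mm j + 1 / ω' mm j) / 2 :=
          Finset.sum_le_sum (hmidle j hj)
      _ = (∑ mm ∈ clients S j, 1 / ω mm j + ∑ mm ∈ clients S j, 1 / ω' mm j) / 2 := by
          rw [← Finset.sum_div, Finset.sum_add_distrib]
      _ = ∑ mm ∈ clients S j, 1 / ω mm j := by
          rw [← hsum j hj]
          ring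
  have hFm_ge : ∀ j ∈ classFinset S i, g ≤ Fq S v ωm j := by
    intro j hj
    have hdm_pos : 0 < armDenom S ωm j :=
      armDenom_pos hcov (fun mm hm => hωmpos mm j hm)
    have hdm_le : armDenom S ωm j ≤ armDenom S ω j := by
      rw [armDenom_def, armDenom_def]
      apply mul_le_mul_of_nonneg_left (hsum_mid_le j hj) (by
        have := Mi_cast_pos hcov j
        positivity)
    have e1 : Fq S v ω j = g := hps j hj
    rw [← e1, Fq, Fq]
    exact div_le_div_of_nonneg_left (by positivity) hdm_pos hdm_le
  have hgm : gtildeC S v (armClass S i) ωm = g := by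
    refine le_antisymm (hmaxω ωm hωmGam) ?_
    rw [gtildeC_of_pos i (fun mm j hj _ => hωmpos mm j hj)]
    exact Finset.le_inf' _ _ (fun j hj => hFm_ge j hj)
  have hmaxm : ∀ ω'' ∈ Gam S,
      gtildeC S v (armClass S i) ω'' ≤ gtildeC S v (armClass S i) ωm :=
    fun ω'' hh => (hmaxω ω'' hh).trans_eq hgm.symm
  have hpsm := gtildeC_max_pseudo hS hv hcov i hωmGam hmaxm
  have e3 : Fq S v ωm i = g := by rw [hpsm i hiQ, hgm]
  have e1 : Fq S v ω i = g := hps i hiQ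
  have hdm_pos : 0 < armDenom S ωm i :=
    armDenom_pos hcov (fun mm hm => hωmpos mm i hm)
  have hdenm : armDenom S ωm i = armDenom S ω i := by
    rw [Fq, div_eq_iff hdm_pos.ne'] at e3
    rw [Fq, div_eq_iff (hdenpos i hiQ).ne'] at e1
    apply mul_left_cancel₀ hgpos.ne'
    linarith [e3, e1]
  have hsumm : ∑ mm ∈ clients S i, 1 / ωm mm i = ∑ mm ∈ clients S i, 1 / ω mm i := by
    have hd := hdenm
    rw [armDenom_def, armDenom_def] at hd
    exact mul_left_cancel₀ (hMine i) hd
  have htot : ∑ mm ∈ clients S i, 1 / ωm mm i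
      = ∑ mm ∈ clients S i, (1 / ω mm i + 1 / ω' mm i) / 2 := by
    rw [hsumm]
    rw [← Finset.sum_div, Finset.sum_add_distrib, ← hsum i hiQ]
    ring
  have hpe := (Finset.sum_eq_sum_iff_of_le (hmidle i hiQ)).1 htot m (mem_clients.2 hiS)
  simp only [hωm] at hpe
  exact inv_midpoint_eq (hpos m i hiS) (hpos' m i hiS) hpe

end Unique

/-- Theorem 4: the common solution is unique, and it satisfies the balanced and
pseudo-balanced conditions. -/
theorem stmt6 (K M : ℕ) (hK : 2 ≤ K) (hM : 1 ≤ M) (S : Fin M → Finset (Fin K))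
    (hS : ∀ m, 2 ≤ (S m).card) (hcov : ∀ i : Fin K, ∃ m, i ∈ S m)
    (v : Fin M → Fin K → ℝ) (hv : v ∈ PSet S) :
    (∃! ω : Fin M → Fin K → ℝ, IsCommonSol S v ω) ∧
      ∀ ω : Fin M → Fin K → ℝ, IsCommonSol S v ω →
        BalancedCond S ω ∧ PseudoBalancedCond S v ω := by
  have hK0 : 0 < K := by omega
  constructor
  · obtain ⟨ω, hω⟩ := exists_commonSol hK hS hv hcov
    exact ⟨ω, hω, fun ω' hω' => commonSol_unique hK0 hS hv hcov hω' hω⟩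
  · intro ω hω
    have hpos := commonSol_pos hK0 hS hv hcov hω
    constructor
    · exact balanced_of_max hS hv hcov hω.1 (fun i => hω.2.2 i) hpos
    · intro i₁ i₂ hrel
      have hQ2 : i₂ ∈ classFinset S i₁ := mem_classFinset.2 hrel
      have hps := gtildeC_max_pseudo hS hv hcov i₁ hω.1 (hω.2.2 i₁)
      have e1 := hps i₁ (self_mem_classFinset S i₁)
      have e2 := hps i₂ hQ2
      exact e1.trans e2.symm

end

end HetTS
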